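/- arXiv:1607.07747 — 4 statements merged into one kernel-verified Lean document; each statement's English description precedes it below -/
import Mathlib

section
/- (Helly's Theorem for median algebras) If C₀, …, Cₙ are convex subsets of a median algebra M that pairwise intersect, then their total intersection is nonempty. -/
/-- A median algebra: a set with a ternary median operation satisfying (Med 1)-(Med 3). -/
structure MedianAlgebra (M : Type*) where
  m : M → M → M → M
  comm₁ : ∀ x y z, m x y z = m x z y
  comm₂ : ∀ x y z, m x y z = m y z x
  idem : ∀ x y, m x x y = x
  assoc : ∀ x y z u v, m (m x y z) u v = m x (m y u v) (m z u v)

namespace MedianAlgebra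

variable {M : Type*}

/-- The interval `[x,y] = {z | z = m x y z}`. -/
def I (A : MedianAlgebra M) (x y : M) : Set M := {z | z = A.m x y z}

/-- A subset is convex if it contains the interval between any two of its points. -/
def Conv (A : MedianAlgebra M) (C : Set M) : Prop :=
  ∀ x ∈ C, ∀ y ∈ C, A.I x y ⊆ C

/-- A half space is a convex set with convex complement. -/
def Halfspace (A : MedianAlgebra M) (H : Set M) : Prop :=
  A.Conv H ∧ A.Conv Hᶜ

/-- The convex hull of a set: the intersection of all convex sets containing it. -/
def hull (A : MedianAlgebra M) (X : Set M) : Set M :=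
  ⋂₀ {C | A.Conv C ∧ X ⊆ C}

/-- The separator `Δ(X,Y)`: half spaces containing `X` and disjoint from `Y`. -/
def sep (A : MedianAlgebra M) (X Y : Set M) : Set (Set M) :=
  {H | A.Halfspace H ∧ X ⊆ H ∧ Y ⊆ Hᶜ}

end MedianAlgebra

/-!
The median of three points taken from the three pairwise intersections of three convex sets lies
in all three sets, which is Helly's theorem for three sets. For more sets one absorbs them one at a
time into a convex set `K`: once `C a` is absorbed, the three-set case shows that `K ∩ C a` still
meets every remaining `C i`.
-/

namespace MedianAlgebra

variable {M : Type*} (A : MedianAlgebra M)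

theorem m_mem_I (x y z : M) : A.m x y z ∈ A.I x y := by
  show A.m x y z = A.m x y (A.m x y z)
  have h := A.assoc x x y y z
  rw [A.idem x y, A.idem y z] at h
  rw [A.comm₁ x y (A.m x y z)]
  exact h

variable {A}

theorem Conv.m_mem {C : Set M} (hC : A.Conv C) {x y : M} (hx : x ∈ C) (hy : y ∈ C) (z : M) :
    A.m x y z ∈ C :=
  hC x hx y hy (A.m_mem_I x y z)

theorem Conv.inter {C D : Set M} (hC : A.Conv C) (hD : A.Conv D) : A.Conv (C ∩ D) :=
  fun _ hx _ hy _ hz => ⟨hC _ hx.1 _ hy.1 hz, hD _ hx.2 _ hy.2 hz⟩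

theorem inter_inter_nonempty {C₁ C₂ C₃ : Set M}
    (h₁ : A.Conv C₁) (h₂ : A.Conv C₂) (h₃ : A.Conv C₃)
    (h₁₂ : (C₁ ∩ C₂).Nonempty) (h₁₃ : (C₁ ∩ C₃).Nonempty) (h₂₃ : (C₂ ∩ C₃).Nonempty) :
    (C₁ ∩ C₂ ∩ C₃).Nonempty := by
  obtain ⟨a, ha₁, ha₂⟩ := h₁₂
  obtain ⟨b, hb₁, hb₃⟩ := h₁₃
  obtain ⟨c, hc₂, hc₃⟩ := h₂₃
  refine ⟨A.m a b c, ⟨h₁.m_mem ha₁ hb₁ c, ?_⟩, ?_⟩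
  · rw [A.comm₁]
    exact h₂.m_mem ha₂ hc₂ b
  · rw [A.comm₂]
    exact h₃.m_mem hb₃ hc₃ a

theorem inter_biInter_nonempty {ι : Type*} (C : ι → Set M) (hC : ∀ i, A.Conv (C i))
    (s : Finset ι) (hs : ∀ i ∈ s, ∀ j ∈ s, (C i ∩ C j).Nonempty) {K : Set M} (hK : A.Conv K)
    (hKne : K.Nonempty) (hKC : ∀ i ∈ s, (K ∩ C i).Nonempty) : (K ∩ ⋂ i ∈ s, C i).Nonempty := by
  classical
  induction s using Finset.induction_on generalizing K with
  | empty => simpa using hKne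
  | insert a s _ ih =>
    have hs' : ∀ i ∈ s, ∀ j ∈ s, (C i ∩ C j).Nonempty := fun i hi j hj =>
      hs i (Finset.mem_insert_of_mem hi) j (Finset.mem_insert_of_mem hj)
    have hKa : ∀ i ∈ s, (K ∩ C a ∩ C i).Nonempty := fun i hi =>
      inter_inter_nonempty hK (hC a) (hC i) (hKC a (Finset.mem_insert_self a s))
        (hKC i (Finset.mem_insert_of_mem hi))
        (hs a (Finset.mem_insert_self a s) i (Finset.mem_insert_of_mem hi))
    have := ih hs' (hK.inter (hC a)) (hKC a (Finset.mem_insert_self a s)) hKa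
    rwa [Finset.set_biInter_insert, ← Set.inter_assoc]

end MedianAlgebra

/-- Helly's Theorem for median algebras. -/
theorem helly {M : Type*} (A : MedianAlgebra M) (n : ℕ) (C : Fin (n + 1) → Set M)
    (hconv : ∀ i, A.Conv (C i)) (hpair : ∀ i j, (C i ∩ C j).Nonempty) :
    (⋂ i, C i).Nonempty := by
  obtain ⟨x, -, hx⟩ := MedianAlgebra.inter_biInter_nonempty C hconv Finset.univ
    (fun i _ j _ => hpair i j) (hconv 0) (hpair 0 0).left (fun i _ => hpair 0 i)
  exact ⟨x, by simpa using hx⟩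
end

section
/- (Separation of disjoint convex sets) If A and B are disjoint convex subsets of a median algebra M, then there exists a half space H ⊆ M with A ⊆ H and B ∩ H = ∅. -/
namespace MedianAlgebra

variable {M : Type*} (A : MedianAlgebra M)

theorem m_swap (x y z : M) : A.m x y z = A.m y x z := by
  rw [A.comm₂, A.comm₁]

theorem idem₁₃ (x y : M) : A.m x y x = x := by
  rw [A.comm₁]
  exact A.idem x y

theorem idem₂₃ (x y : M) : A.m x y y = y := by
  rw [A.comm₂]
  exact A.idem y x

theorem mem_I_iff {x y z : M} : z ∈ A.I x y ↔ A.m x y z = z :=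
  eq_comm

theorem m_absorb (x y z : M) : A.m x y (A.m x y z) = A.m x y z := by
  have hrot : A.m x y z = A.m z x y := by rw [A.comm₂, A.comm₂]
  rw [hrot, A.comm₂ x y, A.comm₂ y, A.assoc, A.idem, idem₁₃]

theorem I_comm (x y : M) : A.I x y = A.I y x :=
  Set.ext fun z => by rw [mem_I_iff, mem_I_iff, m_swap]

theorem m_mem_I_right (x y z : M) : A.m x y z ∈ A.I x z :=
  A.comm₁ x z y ▸ A.m_mem_I x z y

theorem m_distrib (x a b c : M) : A.m x (A.m x a b) c = A.m x (A.m x a c) (A.m x b c) := by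
  rw [A.comm₂ x (A.m x a b) c, A.assoc, ← A.comm₂ x a c, ← A.comm₂ x b c]

/-- The gate map `u ↦ m x u w` onto `[x, w]` commutes with `m · · w`. -/
theorem m_m_right (x c₁ c₂ w : M) :
    A.m x (A.m c₁ c₂ w) w = A.m (A.m x c₁ w) (A.m x c₂ w) w := by
  have hc₁ : A.m c₁ (A.m x c₂ w) w = A.m x (A.m c₁ c₂ w) w := by
    rw [A.comm₂ c₁ (A.m x c₂ w) w, A.assoc, A.idem, ← A.comm₂ c₁ c₂ w]
  rw [A.assoc, idem₁₃, hc₁, A.comm₁ x (A.m c₁ c₂ w) w, A.comm₁ x (A.m x w (A.m c₁ c₂ w)) w,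
    m_absorb]

theorem m_mem_I_m_of_mem_I {x c d : M} (h : d ∈ A.I x c) (w : M) :
    A.m x d w ∈ A.I x (A.m x c w) := by
  rw [mem_I_iff] at h ⊢
  have hcd : A.m x c (A.m x d w) = A.m x d w := by
    rw [A.comm₁ x c (A.m x d w), m_distrib, A.comm₁ x d c, h, A.comm₁ x d (A.m x w c),
      m_distrib, h, A.comm₁ x (A.m x w d) d, A.comm₁ x w d, m_absorb]
  have hwd : A.m x w (A.m x d w) = A.m x d w := by
    rw [A.comm₁ x d w, m_absorb]
  rw [m_distrib, hcd, hwd, idem₂₃]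

theorem mem_I_of_mem_I_of_mem_I {x a a' b w : M} (ha : a ∈ A.I x a') (ha' : a' ∈ A.I x w)
    (hw : w ∈ A.I a b) : w ∈ A.I a' b := by
  rw [mem_I_iff] at *
  have h₁ : A.m a' b w = A.m x w (A.m a' b w) := by
    conv_lhs => rw [← ha']
    rw [A.assoc, idem₁₃]
  have h₂ : w = A.m x (A.m a' b w) w := by
    conv_lhs => rw [← hw, ← ha]
    rw [A.assoc, hw]
  rw [h₁, A.comm₁ x w (A.m a' b w), ← h₂]

theorem mem_I_m_of_mem_I {x c₁ c₂ d₁ d₂ w : M} (h₁ : d₁ ∈ A.I x c₁) (h₂ : d₂ ∈ A.I x c₂)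
    (hw : w ∈ A.I d₁ d₂) : w ∈ A.I x (A.m c₁ c₂ w) := by
  have hd : w ∈ A.I (A.m x d₁ w) (A.m x d₂ w) := by
    rw [mem_I_iff, ← m_m_right, A.mem_I_iff.1 hw, idem₂₃]
  have hc₁ : w ∈ A.I (A.m x c₁ w) (A.m x d₂ w) :=
    A.mem_I_of_mem_I_of_mem_I (A.m_mem_I_m_of_mem_I h₁ w) (A.m_mem_I_right x c₁ w) hd
  rw [I_comm] at hc₁
  have hc₂ : w ∈ A.I (A.m x c₂ w) (A.m x c₁ w) :=
    A.mem_I_of_mem_I_of_mem_I (A.m_mem_I_m_of_mem_I h₂ w) (A.m_mem_I_right x c₂ w) hc₁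
  rw [I_comm, mem_I_iff] at hc₂
  rw [mem_I_iff, m_m_right, hc₂]

theorem mem_I_m_right_of_mem_I {x c t : M} (h : t ∈ A.I x c) (c' : M) :
    t ∈ A.I x (A.m c c' t) := by
  rw [mem_I_iff] at *
  rw [m_m_right, h, idem₁₃]

theorem mem_I_m_left_of_mem_I {x y K t : M} (hx : t ∈ A.I x K) (hy : t ∈ A.I y K) (z : M) :
    t ∈ A.I (A.m x y z) K := by
  rw [mem_I_iff] at *
  have hrot : A.m x t (A.m z K t) = A.m (A.m z K t) x t := by rw [A.comm₂, A.comm₂]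
  rw [A.assoc, hy, hrot, A.assoc, idem₁₃, A.m_swap K x t, hx, idem₂₃]

theorem conv_sUnion_of_isChain {c : Set (Set M)} (hc : ∀ C ∈ c, A.Conv C)
    (hchain : IsChain (· ⊆ ·) c) : A.Conv (⋃₀ c) := by
  rintro x ⟨Cx, hCx, hx⟩ y ⟨Cy, hCy, hy⟩ z hz
  rcases hchain.total hCx hCy with h | h
  · exact Set.subset_sUnion_of_mem hCy (hc Cy hCy x (h hx) y hy hz)
  · exact Set.subset_sUnion_of_mem hCx (hc Cx hCx x hx y (h hy) hz)

def join (p : M) (C : Set M) : Set M :=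
  {u | ∃ c ∈ C, u ∈ A.I p c}

variable {A}

theorem conv_join {C : Set M} (hC : A.Conv C) (p : M) : A.Conv (A.join p C) := by
  rintro d₁ ⟨c₁, hc₁, h₁⟩ d₂ ⟨c₂, hc₂, h₂⟩ u hu
  exact ⟨A.m c₁ c₂ u, hC c₁ hc₁ c₂ hc₂ (A.m_mem_I c₁ c₂ u), A.mem_I_m_of_mem_I h₁ h₂ hu⟩

theorem subset_join {C : Set M} (p : M) : C ⊆ A.join p C :=
  fun c hc => ⟨c, hc, A.mem_I_iff.2 (A.idem₂₃ p c)⟩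

theorem mem_join_self {C : Set M} {w : M} (hw : w ∈ C) (p : M) : p ∈ A.join p C :=
  ⟨w, hw, A.mem_I_iff.2 (A.idem₁₃ p w)⟩

theorem mem_of_mem_join_of_mem_join {C : Set M} (hC : A.Conv C) {a b w t : M} (hw : w ∈ C)
    (hwab : w ∈ A.I a b) (ha : t ∈ A.join a C) (hb : t ∈ A.join b C) : t ∈ C := by
  obtain ⟨c, hc, htc⟩ := ha
  obtain ⟨c', hc', htc'⟩ := hb
  have hK : A.m c c' t ∈ C := hC c hc c' hc' (A.m_mem_I c c' t)
  have htaK : t ∈ A.I a (A.m c c' t) := A.mem_I_m_right_of_mem_I htc c'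
  have htbK : t ∈ A.I b (A.m c c' t) := A.m_swap c' c t ▸ A.mem_I_m_right_of_mem_I htc' c
  have htwK := A.mem_I_m_left_of_mem_I htaK htbK w
  rw [A.mem_I_iff.1 hwab] at htwK
  exact hC w hw _ hK htwK

theorem exists_maximal_conv_disjoint {S T : Set M} (hS : A.Conv S) (hST : Disjoint S T) :
    ∃ C, S ⊆ C ∧ Maximal (fun C => A.Conv C ∧ Disjoint C T) C :=
  zorn_subset_nonempty {C | A.Conv C ∧ Disjoint C T}
    (fun c hc hchain _ => ⟨⋃₀ c,
      ⟨A.conv_sUnion_of_isChain (fun _ h => (hc h).1) hchain,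
        Set.disjoint_sUnion_left.2 fun _ h => (hc h).2⟩,
      fun _ => Set.subset_sUnion_of_mem⟩)
    S ⟨hS, hST⟩

theorem not_disjoint_join_of_maximal {C T : Set M}
    (hC : Maximal (fun C => A.Conv C ∧ Disjoint C T) C) {p w : M} (hw : w ∈ C) (hp : p ∉ C) :
    ¬Disjoint (A.join p C) T :=
  fun hdisj => hp (hC.2 ⟨conv_join hC.1.1 p, hdisj⟩ (subset_join p) (mem_join_self hw p))

theorem conv_compl_of_maximal {C T : Set M} (hC : Maximal (fun C => A.Conv C ∧ Disjoint C T) C)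
    (hT : A.Conv T) : A.Conv Cᶜ := by
  intro a ha b hb w hw hwC
  obtain ⟨t₁, ht₁a, ht₁T⟩ := Set.not_disjoint_iff.1 (not_disjoint_join_of_maximal hC hwC ha)
  obtain ⟨t₂, ht₂b, ht₂T⟩ := Set.not_disjoint_iff.1 (not_disjoint_join_of_maximal hC hwC hb)
  have htT : A.m t₁ t₂ w ∈ T := hT t₁ ht₁T t₂ ht₂T (A.m_mem_I t₁ t₂ w)
  have hta : A.m t₁ t₂ w ∈ A.join a C :=
    conv_join hC.1.1 a t₁ ht₁a w (subset_join a hwC) (A.m_mem_I_right t₁ t₂ w)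
  have htb : A.m t₁ t₂ w ∈ A.join b C :=
    conv_join hC.1.1 b t₂ ht₂b w (subset_join b hwC)
      (A.m_swap t₂ t₁ w ▸ A.m_mem_I_right t₂ t₁ w)
  exact Set.disjoint_left.1 hC.1.2 (mem_of_mem_join_of_mem_join hC.1.1 hwC hw hta htb) htT

end MedianAlgebra

theorem separation_of_disjoint_convex {M : Type*} (A : MedianAlgebra M) (S T : Set M)
    (hS : A.Conv S) (hT : A.Conv T) (hdisj : S ∩ T = ∅) :
    ∃ H : Set M, A.Halfspace H ∧ S ⊆ H ∧ T ∩ H = ∅ := by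
  obtain ⟨C, hSC, hC⟩ :=
    A.exists_maximal_conv_disjoint hS (Set.disjoint_iff_inter_eq_empty.2 hdisj)
  exact ⟨C, ⟨hC.1.1, A.conv_compl_of_maximal hC hT⟩, hSC,
    Set.disjoint_iff_inter_eq_empty.1 hC.1.2.symm⟩
end

section
/- (Extension Algorithm) Let P be a poc set, B ⊆ P a filter base and a ∈ P with a, a* ∉ B. Then B ∪ {a} or B ∪ {a*} is a filter base; in particular every filter base extends to an ultra filter (by Zorn's lemma). -/
/-- A poc set: a partially ordered set with least element `0` and an
order-reversing involution `*` such that `a ≤ a* → a = 0`. -/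
structure PocSet (P : Type*) where
  le : P → P → Prop
  le_refl : ∀ a, le a a
  le_trans : ∀ {a b c}, le a b → le b c → le a c
  le_antisymm : ∀ {a b}, le a b → le b a → a = b
  zero : P
  star : P → P
  star_star : ∀ a, star (star a) = a
  star_anti : ∀ {a b}, le a b → le (star b) (star a)
  zero_le : ∀ a, le (zero) a
  eq_zero : ∀ a, le a (star a) → a = zero

namespace PocSet

variable {P : Type*}

/-- A filter base: a subset `B` with `a ≰ b*` for all `a, b ∈ B`. -/
def FilterBase (S : PocSet P) (B : Set P) : Prop :=
  ∀ a ∈ B, ∀ b ∈ B, ¬ S.le a (S.star b)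

/-- An ultra filter: an upper set containing exactly one of `a, a*` for every `a`. -/
def Ultra (S : PocSet P) (U : Set P) : Prop :=
  (∀ a ∈ U, ∀ b, S.le a b → b ∈ U) ∧ ∀ a, Xor' (a ∈ U) (S.star a ∈ U)

/-- Two elements are nested if `a` is comparable to `b` or to `b*`. -/
def Nested (S : PocSet P) (a b : P) : Prop :=
  S.le a b ∨ S.le b a ∨ S.le a (S.star b) ∨ S.le (S.star b) a

/-- Two elements are transverse if they are not nested. -/
def Transverse (S : PocSet P) (a b : P) : Prop := ¬ S.Nested a b

/-- A proper element: neither `0` nor `0*`. -/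
def Proper (S : PocSet P) (a : P) : Prop := a ≠ S.zero ∧ a ≠ S.star S.zero

end PocSet

namespace PocSet

variable {P : Type*} {S : PocSet P} {B M : Set P} {a b : P}

theorem star_le_star_iff : S.le (S.star a) (S.star b) ↔ S.le b a :=
  ⟨fun h => by simpa only [star_star] using S.star_anti h, S.star_anti⟩

theorem le_star_comm (h : S.le a (S.star b)) : S.le b (S.star a) := by
  simpa only [star_star] using S.star_anti h

theorem filterBase_union_singleton_iff :
    S.FilterBase (B ∪ {a}) ↔ S.FilterBase B ∧ ∀ b ∈ B ∪ {a}, ¬ S.le a (S.star b) := by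
  constructor
  · intro h
    exact ⟨fun x hx y hy => h x (.inl hx) y (.inl hy), fun b hb => h a (.inr rfl) b hb⟩
  · rintro ⟨hB, ha⟩ x (hx | rfl) y hy
    · rcases hy with hy | rfl
      · exact hB x hx y hy
      · exact fun hxy => ha x (.inl hx) (le_star_comm hxy)
    · exact ha y hy

theorem FilterBase.le_star_of_not_union_singleton (hB : S.FilterBase B)
    (h : ¬ S.FilterBase (B ∪ {a})) : S.le a (S.star a) ∨ ∃ b ∈ B, S.le a (S.star b) := by
  simp only [filterBase_union_singleton_iff, hB, true_and, not_forall, not_not] at h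
  obtain ⟨b, hb | rfl, hab⟩ := h
  · exact .inr ⟨b, hb, hab⟩
  · exact .inl hab

/-- If both extensions fail then `c ≤ a ≤ b*` for some `b, c ∈ B`, with `b := a*` or `c := a`
where the failure involves `a` alone; this contradicts the filter base property except when
`a ≤ a*` and `a* ≤ a`, which forces `a = 0 = a*`. -/
theorem FilterBase.union_singleton_or_union_singleton_star (hnt : S.star S.zero ≠ S.zero)
    (hB : S.FilterBase B) (a : P) :
    S.FilterBase (B ∪ {a}) ∨ S.FilterBase (B ∪ {S.star a}) := by
  by_contra! h
  obtain ⟨ha, ha'⟩ := h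
  have ha := hB.le_star_of_not_union_singleton ha
  have ha' := hB.le_star_of_not_union_singleton ha'
  simp only [star_star, star_le_star_iff] at ha'
  rcases ha with ha | ⟨b, hb, hab⟩ <;> rcases ha' with ha' | ⟨c, hc, hca⟩
  · have ha0 : a = S.zero := S.eq_zero a ha
    have ha0' : S.star a = S.zero := S.eq_zero _ (by rwa [star_star])
    exact hnt (ha0 ▸ ha0')
  · exact hB c hc c hc (S.le_trans hca (S.le_trans ha (S.star_anti hca)))
  · exact hB b hb b hb (S.le_trans (le_star_comm hab) (S.le_trans ha' hab))
  · exact hB c hc b hb (S.le_trans hca hab)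

theorem filterBase_sUnion_of_isChain {c : Set (Set P)} (hc : ∀ C ∈ c, S.FilterBase C)
    (hchain : IsChain (· ⊆ ·) c) : S.FilterBase (⋃₀ c) := by
  rintro x ⟨C, hC, hx⟩ y ⟨D, hD, hy⟩
  rcases hchain.total hC hD with hCD | hDC
  · exact hc D hD x (hCD hx) y hy
  · exact hc C hC x hx y (hDC hy)

theorem FilterBase.exists_maximal_superset (hB : S.FilterBase B) :
    ∃ M, B ⊆ M ∧ Maximal S.FilterBase M :=
  zorn_subset_nonempty {C | S.FilterBase C}
    (fun c hc hchain _ => ⟨⋃₀ c, filterBase_sUnion_of_isChain hc hchain,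
      fun _ => Set.subset_sUnion_of_mem⟩) B hB

theorem FilterBase.union_singleton_of_le (hM : S.FilterBase M) (ha : a ∈ M)
    (hab : S.le a b) : S.FilterBase (M ∪ {b}) := by
  refine filterBase_union_singleton_iff.2 ⟨hM, ?_⟩
  rintro c (hc | rfl) hbc
  · exact hM a ha c hc (S.le_trans hab hbc)
  · exact hM a ha a ha (S.le_trans hab (S.le_trans hbc (S.star_anti hab)))

theorem mem_of_maximal_filterBase (hM : Maximal S.FilterBase M)
    (ha : S.FilterBase (M ∪ {a})) : a ∈ M :=
  (hM.eq_of_subset ha Set.subset_union_left).symm ▸ Set.mem_union_right M rfl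

theorem mem_or_star_mem_of_maximal_filterBase (hnt : S.star S.zero ≠ S.zero)
    (hM : Maximal S.FilterBase M) (a : P) : a ∈ M ∨ S.star a ∈ M :=
  (hM.prop.union_singleton_or_union_singleton_star hnt a).imp
    (mem_of_maximal_filterBase hM) (mem_of_maximal_filterBase hM)

theorem FilterBase.not_mem_and_star_mem (hM : S.FilterBase M) (a : P) :
    ¬ (a ∈ M ∧ S.star a ∈ M) := fun ⟨ha, ha'⟩ =>
  hM a ha (S.star a) ha' (by rw [star_star]; exact S.le_refl a)

theorem ultra_of_maximal_filterBase (hnt : S.star S.zero ≠ S.zero)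
    (hM : Maximal S.FilterBase M) : S.Ultra M :=
  ⟨fun _ ha _ hab => mem_of_maximal_filterBase hM (hM.prop.union_singleton_of_le ha hab),
    fun a => (xor_iff_or_and_not_and _ _).2
      ⟨mem_or_star_mem_of_maximal_filterBase hnt hM a, hM.prop.not_mem_and_star_mem a⟩⟩

end PocSet

/-- The Extension Algorithm: a filter base avoiding `a` and `a*` can be extended by one of
them, and every filter base extends to an ultra filter (the poc set being non trivial). -/
theorem extension_algorithm {P : Type*} (S : PocSet P)
    (hnt : S.star S.zero ≠ S.zero) :
    (∀ B : Set P, S.FilterBase B → ∀ a : P, a ∉ B → S.star a ∉ B →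
      S.FilterBase (B ∪ {a}) ∨ S.FilterBase (B ∪ {S.star a})) ∧
    (∀ B : Set P, S.FilterBase B → ∃ U : Set P, S.Ultra U ∧ B ⊆ U) := by
  refine ⟨fun B hB a _ _ => hB.union_singleton_or_union_singleton_star hnt a, fun B hB => ?_⟩
  obtain ⟨M, hBM, hM⟩ := hB.exists_maximal_superset
  exact ⟨M, PocSet.ultra_of_maximal_filterBase hnt hM, hBM⟩
end

section
/- Every simple graph Γ (no loops, no multiple edges) arises as the transversality graph of some poc set P: there is a poc set whose proper elements modulo * are in bijection with the vertices of Γ, with two elements transverse exactly when the corresponding vertices are adjacent. -/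
/-!
Take `X = {z} ⊔ V ⊔ E` and let `A v ⊆ X` consist of `v` and the edges at `v`. The sets `∅`, `X`,
`A v` and their complements form a poc set under inclusion and complement. Since `z` lies in no
`A v`, the sets `A v ∪ A w` are never all of `X`; since the vertex `v` lies only in `A v`,
distinct blocks are incomparable. So the only possible nesting between `A v` and `A w` is
disjointness, and `A v ∩ A w` is nonempty exactly when `v` and `w` are joined by an edge.
-/

namespace PocSet

variable {α ι : Type*} [BooleanAlgebra α]

def ofComplClosed (F : Set α) (bot_mem : ⊥ ∈ F) (compl_mem : ∀ a ∈ F, aᶜ ∈ F) : PocSet F where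
  le a b := (a : α) ≤ b
  le_refl _ := le_rfl
  le_trans h₁ h₂ := h₁.trans h₂
  le_antisymm h₁ h₂ := Subtype.ext (h₁.antisymm h₂)
  zero := ⟨⊥, bot_mem⟩
  star a := ⟨(a : α)ᶜ, compl_mem a a.2⟩
  star_star a := Subtype.ext (compl_compl (a : α))
  star_anti h := compl_le_compl h
  zero_le _ := bot_le
  eq_zero _ h := Subtype.ext (le_compl_self.mp h)

section

variable {F : Set α} {bot_mem : ⊥ ∈ F} {compl_mem : ∀ a ∈ F, aᶜ ∈ F}

theorem proper_ofComplClosed_iff {a : F} :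
    (ofComplClosed F bot_mem compl_mem).Proper a ↔ (a : α) ≠ ⊥ ∧ (a : α) ≠ ⊤ := by
  simp only [Proper, ofComplClosed, ne_eq, Subtype.ext_iff, compl_bot]

theorem transverse_ofComplClosed_iff {a b : F} :
    (ofComplClosed F bot_mem compl_mem).Transverse a b ↔
      ¬ (a : α) ≤ b ∧ ¬ (b : α) ≤ a ∧ ¬ Disjoint (a : α) b ∧ ¬ Codisjoint (a : α) b := by
  simp only [Transverse, Nested, ofComplClosed, le_compl_iff_disjoint_right,
    ← codisjoint_iff_compl_le_right, codisjoint_comm (a := (b : α))]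
  tauto

end

def complHull (b : ι → α) : Set α := {a | a = ⊥ ∨ a = ⊤ ∨ ∃ i, a = b i ∨ a = (b i)ᶜ}

theorem compl_mem_complHull {b : ι → α} {a : α} (ha : a ∈ complHull b) : aᶜ ∈ complHull b := by
  rcases ha with rfl | rfl | ⟨i, rfl | rfl⟩
  · exact .inr (.inl compl_bot)
  · exact .inl compl_top
  · exact .inr (.inr ⟨i, .inr rfl⟩)
  · exact .inr (.inr ⟨i, .inl (compl_compl _)⟩)

def ofFamily (b : ι → α) : PocSet (complHull b) :=
  ofComplClosed _ (show ⊥ ∈ complHull b from .inl rfl) fun _ => compl_mem_complHull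

def ofFamily.gen (b : ι → α) (i : ι) : complHull b := ⟨b i, .inr (.inr ⟨i, .inl rfl⟩)⟩

theorem ofFamily.exists_gen_of_proper {b : ι → α} {a : complHull b} (ha : (ofFamily b).Proper a) :
    ∃ i, a = gen b i ∨ a = (ofFamily b).star (gen b i) := by
  obtain ⟨a, ha'⟩ := a
  rw [ofFamily, proper_ofComplClosed_iff] at ha
  rcases ha' with rfl | rfl | ⟨i, rfl | rfl⟩
  · exact absurd rfl ha.1
  · exact absurd rfl ha.2
  · exact ⟨i, .inl rfl⟩
  · exact ⟨i, .inr rfl⟩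

end PocSet

namespace SimpleGraph

variable {V : Type*} (G : SimpleGraph V)

/-- The set `A v`, taken inside `{z} ⊔ V ⊔ Sym2 V` with `z = none`: the pairs of `Sym2 V` that
are not edges lie in no block, so they change nothing. -/
def incidenceBlock (v : V) : Set (Option (V ⊕ Sym2 V)) :=
  {x | x = some (.inl v) ∨ ∃ e ∈ G.incidenceSet v, x = some (.inr e)}

theorem none_notMem_incidenceBlock (v : V) : none ∉ G.incidenceBlock v := by
  simp [incidenceBlock]

theorem incidenceBlock_ne_empty (v : V) : G.incidenceBlock v ≠ ∅ :=
  Set.nonempty_iff_ne_empty.mp ⟨some (.inl v), .inl rfl⟩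

theorem not_codisjoint_incidenceBlock (v w : V) :
    ¬ Codisjoint (G.incidenceBlock v) (G.incidenceBlock w) := fun h =>
  ((codisjoint_iff.mp h).ge (Set.mem_univ none)).elim (G.none_notMem_incidenceBlock v)
    (G.none_notMem_incidenceBlock w)

variable {G}

theorem some_inl_mem_incidenceBlock_iff {v w : V} :
    some (.inl v) ∈ G.incidenceBlock w ↔ v = w := by
  simp [incidenceBlock]

theorem incidenceBlock_subset_iff {v w : V} :
    G.incidenceBlock v ⊆ G.incidenceBlock w ↔ v = w := by
  refine ⟨fun h => some_inl_mem_incidenceBlock_iff.mp (h ?_), fun h => h ▸ subset_rfl⟩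
  exact some_inl_mem_incidenceBlock_iff.mpr rfl

theorem incidenceBlock_injective : Function.Injective G.incidenceBlock := fun _ _ h =>
  incidenceBlock_subset_iff.mp h.le

theorem not_disjoint_incidenceBlock_iff {v w : V} (hvw : v ≠ w) :
    ¬ Disjoint (G.incidenceBlock v) (G.incidenceBlock w) ↔ G.Adj v w := by
  rw [Set.not_disjoint_iff]
  constructor
  · rintro ⟨x, hv | ⟨e, he, rfl⟩, hw⟩
    · exact absurd (some_inl_mem_incidenceBlock_iff.mp (hv ▸ hw)) hvw
    · obtain ⟨e', he', he'e⟩ : ∃ e' ∈ G.incidenceSet w, e = e' := by simpa [incidenceBlock] using hw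
      exact G.adj_of_mem_incidenceSet hvw he (he'e ▸ he')
  · intro h
    exact ⟨_, .inr ⟨_, G.mk'_mem_incidenceSet_left_iff.mpr h, rfl⟩,
      .inr ⟨_, G.mk'_mem_incidenceSet_right_iff.mpr h, rfl⟩⟩

end SimpleGraph

/-- Every simple graph is the transversality graph of some poc set. -/
theorem exists_pocSet_transversality_graph {V : Type u} (G : SimpleGraph V) :
    ∃ (P : Type u) (S : PocSet P) (f : V → P),
      (∀ v, S.Proper (f v)) ∧
      (∀ v w, f v = f w → v = w) ∧
      (∀ v w, f v ≠ S.star (f w)) ∧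
      (∀ a : P, S.Proper a → ∃ v, a = f v ∨ a = S.star (f v)) ∧
      (∀ v w, v ≠ w → (S.Transverse (f v) (f w) ↔ G.Adj v w)) := by
  refine ⟨_, PocSet.ofFamily G.incidenceBlock, PocSet.ofFamily.gen G.incidenceBlock,
    fun v => ?_, fun v w h => SimpleGraph.incidenceBlock_injective (congrArg Subtype.val h),
    fun v w h => ?_, fun _ => PocSet.ofFamily.exists_gen_of_proper, fun v w hvw => ?_⟩
  · refine PocSet.proper_ofComplClosed_iff.mpr ⟨G.incidenceBlock_ne_empty v, fun h => ?_⟩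
    exact G.not_codisjoint_incidenceBlock v v (codisjoint_self.mpr h)
  · exact G.not_codisjoint_incidenceBlock v w
      (codisjoint_iff_compl_le_left.mpr (congrArg Subtype.val h).ge)
  · rw [PocSet.ofFamily, PocSet.transverse_ofComplClosed_iff]
    simp only [PocSet.ofFamily.gen, SimpleGraph.incidenceBlock_subset_iff,
      SimpleGraph.not_disjoint_incidenceBlock_iff hvw]
    simp [hvw, Ne.symm hvw, G.not_codisjoint_incidenceBlock]
end
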